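/- Let p be prime, H ≤ F_p^* a multiplicative subgroup with |H| < p^{1/2}, N = {L+1,...,L+N} an interval of N consecutive integers, and a coprime to p. Assume J(N,H) ≤ p^{o(1)}(|H|^2 + N|H| + N^2|H|^2/p + N|H|^{7/4}/p^{1/4}) and T_2(H) ≪ |H|^{49/20} log^{1/5}|H|. Then ∑_{n∈N} |∑_{x∈H} e_p(anx)| ≤ N|H| · Δ1^{1/4} · p^{o(1)}, where Δ1 = (p / (N |H|^{2+11/20})) · Γ(N,H) and Γ(N,H) = 1 + |H|/N + N|H|/p + |H|^{3/4}/p^{1/4}. -/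

import Mathlib

open scoped Classical

/-- `ep p z = exp(2πi z/p)`, where `z ∈ F_p` is lifted to `{0,...,p-1}`. -/
noncomputable def ep (p : ℕ) (z : ZMod p) : ℂ :=
  Complex.exp (2 * Real.pi * Complex.I * z.val / p)

/-- number of `2m`-tuples in `H^{2m}` with `h₁+⋯+h_m ≡ h_{m+1}+⋯+h_{2m} (mod p)`. -/
noncomputable def T (p m : ℕ) (H : Subgroup (ZMod p)ˣ) : ℕ :=
  Nat.card {t : (Fin m → H) × (Fin m → H) //
    (∑ i, ((t.1 i : (ZMod p)ˣ) : ZMod p)) = ∑ i, ((t.2 i : (ZMod p)ˣ) : ZMod p)}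

/-- number of quadruples `(n₁,n₂,h₁,h₂) ∈ 𝒩² × H²` with `n₁h₁ ≡ n₂h₂ (mod p)`,
where `𝒩 = {L+1,...,L+N}`. -/
noncomputable def J (p : ℕ) (L : ℤ) (N : ℕ) (H : Subgroup (ZMod p)ˣ) : ℕ :=
  Nat.card {q : (ℤ × ℤ) × H × H //
    q.1.1 ∈ Finset.Icc (L + 1) (L + N) ∧ q.1.2 ∈ Finset.Icc (L + 1) (L + N) ∧
      (q.1.1 : ZMod p) * ((q.2.1 : (ZMod p)ˣ) : ZMod p)
        = (q.1.2 : ZMod p) * ((q.2.2 : (ZMod p)ˣ) : ZMod p)}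

/-!
Write `G(r) = ∑_{x ∈ H} e_p(r x)`. Since `|G|` is invariant under `r ↦ r h` for `h ∈ H`,
`|H| · ∑_{n ∈ 𝒩} |G(a n)| = ∑_{(n, h) ∈ 𝒩 × H} |G(a n h)|`. Grouping the pairs `(n, h)` by the
value of `n h`, Hölder's inequality bounds the fourth power of this sum by
`(N |H|)² · J(𝒩, H) · ∑_r |G(r)|⁴`, and orthogonality of additive characters gives
`∑_r |G(r)|⁴ = p T₂(H)`. The two hypotheses, with `log |H| ≤ log p ≤ p^{15ε} / (15ε)`, then give
the bound.
-/

open Finset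

lemma AddChar.map_sum_eq_prod {A M ι : Type*} [AddCommMonoid A] [CommMonoid M] (ψ : AddChar A M)
    (s : Finset ι) (f : ι → A) : ψ (∑ i ∈ s, f i) = ∏ i ∈ s, ψ (f i) := by
  classical
  induction s using Finset.induction_on with
  | empty => simp
  | insert i s hi ih => rw [sum_insert hi, prod_insert hi, AddChar.map_add_eq_mul, ih]

namespace Finset

lemma sum_mul_pow_four_le {ι : Type*} (s : Finset ι) {w f : ι → ℝ} (hw : ∀ i ∈ s, 0 ≤ w i) :
    (∑ i ∈ s, w i * f i) ^ 4 ≤ (∑ i ∈ s, w i) ^ 2 * (∑ i ∈ s, w i ^ 2) * ∑ i ∈ s, f i ^ 4 := by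
  have h₁ : (∑ i ∈ s, w i * f i) ^ 2 ≤ (∑ i ∈ s, w i) * ∑ i ∈ s, w i * f i ^ 2 :=
    sum_sq_le_sum_mul_sum_of_sq_le_mul s hw (fun i hi => mul_nonneg (hw i hi) (sq_nonneg _))
      fun i _ => le_of_eq (by ring)
  have h₂ : (∑ i ∈ s, w i * f i ^ 2) ^ 2 ≤ (∑ i ∈ s, w i ^ 2) * ∑ i ∈ s, f i ^ 4 :=
    (sum_mul_sq_le_sq_mul_sq s w fun i => f i ^ 2).trans_eq <| by simp only [← pow_mul]
  calc (∑ i ∈ s, w i * f i) ^ 4 = ((∑ i ∈ s, w i * f i) ^ 2) ^ 2 := by ring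
    _ ≤ ((∑ i ∈ s, w i) * ∑ i ∈ s, w i * f i ^ 2) ^ 2 := by gcongr
    _ = (∑ i ∈ s, w i) ^ 2 * (∑ i ∈ s, w i * f i ^ 2) ^ 2 := by ring
    _ ≤ _ := by
      rw [mul_assoc]
      gcongr

lemma sum_comp_pow_four_le {α β : Type*} [Fintype β] [DecidableEq β] (s : Finset α) (g : α → β)
    (F : β → ℝ) :
    (∑ q ∈ s, F (g q)) ^ 4 ≤ (#s : ℝ) ^ 2 * #{x ∈ s ×ˢ s | g x.1 = g x.2} * ∑ r, F r ^ 4 := by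
  set w : β → ℝ := fun r => #{q ∈ s | g q = r}
  have hsum : ∑ q ∈ s, F (g q) = ∑ r, w r * F r := by
    rw [← sum_fiberwise s g]
    refine Fintype.sum_congr _ _ fun r => ?_
    rw [sum_congr rfl fun q hq => by rw [(mem_filter.1 hq).2], sum_const, nsmul_eq_mul]
  have hcard : ∑ r, w r = #s := by
    simp only [w]
    exact_mod_cast (card_eq_sum_card_fiberwise fun q _ => mem_univ (g q)).symm
  have hcoll : ∑ r, w r ^ 2 = #{x ∈ s ×ˢ s | g x.1 = g x.2} := by
    rw [card_eq_sum_card_fiberwise (f := fun x => g x.1) fun x _ => mem_univ _]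
    push_cast
    refine Fintype.sum_congr _ _ fun r => ?_
    rw [sq, ← Nat.cast_mul, ← card_product]
    congr 2
    ext x
    simp only [mem_filter, mem_product]
    constructor
    · rintro ⟨⟨h1, h2⟩, ⟨h3, h4⟩⟩; exact ⟨⟨⟨h1, h3⟩, h2.trans h4.symm⟩, h2⟩
    · rintro ⟨⟨⟨h1, h3⟩, h⟩, h2⟩; exact ⟨⟨h1, h2⟩, ⟨h3, h ▸ h2⟩⟩
  rw [hsum, ← hcard, ← hcoll]
  exact sum_mul_pow_four_le _ fun r _ => Nat.cast_nonneg _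

end Finset

namespace Real

lemma log_rpow_le_rpow_div {x y c δ : ℝ} (hx : 1 ≤ x) (hxy : x ≤ y) (hc : 0 < c) (hδ : 0 < δ) :
    log x ^ c ≤ y ^ δ / (δ / c) ^ c := by
  have hy : 0 ≤ y := by linarith
  calc log x ^ c ≤ (y ^ (δ / c) / (δ / c)) ^ c :=
        rpow_le_rpow (log_nonneg hx)
          ((log_le_log (by linarith) hxy).trans (log_le_rpow_div hy (by positivity))) hc.le
    _ = y ^ δ / (δ / c) ^ c := by
      rw [div_rpow (by positivity) (by positivity), ← rpow_mul hy, div_mul_cancel₀ _ hc.ne']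

lemma rpow_mul_rpow_three_mul {x : ℝ} (hx : 0 < x) (ε : ℝ) :
    x ^ ε * x ^ (3 * ε) = (x ^ ε) ^ 4 := by
  rw [← rpow_natCast, ← rpow_mul hx.le, ← rpow_add hx]
  ring_nf

lemma rpow_one_div_four_pow_four {x : ℝ} (hx : 0 ≤ x) : (x ^ ((1 : ℝ) / 4)) ^ 4 = x := by
  simpa using rpow_inv_natCast_pow hx four_ne_zero

end Real

lemma le_mul_rpow_of_pow_four_le {S x y : ℝ} (hS : 0 ≤ S) (hx : 0 ≤ x) (hy : 0 ≤ y)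
    (h : S ^ 4 ≤ x ^ 4 * y) : S ≤ x * y ^ ((1 : ℝ) / 4) := by
  refine (pow_le_pow_iff_left₀ hS (by positivity) four_ne_zero).mp ?_
  rwa [mul_pow, Real.rpow_one_div_four_pow_four hy]

lemma sq_add_mul_add_add_eq_mul {n h P : ℝ} (hn : n ≠ 0) (hh : 0 ≤ h) (hP : 0 < P) :
    h ^ 2 + n * h + n ^ 2 * h ^ 2 / P + n * h ^ ((7 : ℝ) / 4) / P ^ ((1 : ℝ) / 4)
      = n * h * (1 + h / n + n * h / P + h ^ ((3 : ℝ) / 4) / P ^ ((1 : ℝ) / 4)) := by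
  have h74 : h ^ ((7 : ℝ) / 4) = h * h ^ ((3 : ℝ) / 4) := by
    rw [← Real.rpow_one_add' hh (by norm_num)]
    norm_num
  rw [h74]
  field_simp
  ring

lemma pow_four_le_of_bounds {S n h P J T A B Γ : ℝ} (hn : 0 < n) (hh : 0 < h) (hP : 0 ≤ P)
    (hJ₀ : 0 ≤ J) (hT₀ : 0 ≤ T) (hS : (h * S) ^ 4 ≤ (n * h) ^ 2 * J * (P * T))
    (hJ : J ≤ A * (n * h * Γ)) (hT : T ≤ B * h ^ ((49 : ℝ) / 20)) :
    S ^ 4 ≤ A * B * (n * h) ^ 4 * (P / (n * h ^ ((2 : ℝ) + 11 / 20)) * Γ) := by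
  have hexp : h ^ ((49 : ℝ) / 20) * h ^ ((2 : ℝ) + 11 / 20) = h ^ 5 := by
    rw [← Real.rpow_add hh, ← Real.rpow_natCast]
    norm_num
  have hpos : 0 < h ^ ((2 : ℝ) + 11 / 20) := by positivity
  refine le_of_mul_le_mul_left ?_ (pow_pos hh 4)
  calc h ^ 4 * S ^ 4 = (h * S) ^ 4 := by ring
    _ ≤ (n * h) ^ 2 * J * (P * T) := hS
    _ ≤ (n * h) ^ 2 * (A * (n * h * Γ)) * (P * (B * h ^ ((49 : ℝ) / 20))) := by
      gcongr
      exact mul_nonneg (sq_nonneg _) (hJ₀.trans hJ)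
    _ = h ^ 4 * (A * B * (n * h) ^ 4 * (P / (n * h ^ ((2 : ℝ) + 11 / 20)) * Γ)) := by
      generalize h ^ ((2 : ℝ) + 11 / 20) = X at hexp hpos ⊢
      field_simp
      linear_combination (A * Γ * P * B) * hexp

lemma ep_eq_stdAddChar (p : ℕ) [NeZero p] : ep p = ZMod.stdAddChar := by
  ext z
  rw [ep, ZMod.stdAddChar_apply, ZMod.toCircle_apply]

noncomputable def gaussPeriod (p : ℕ) [NeZero p] (H : Subgroup (ZMod p)ˣ) (r : ZMod p) : ℂ :=
  ∑ x : H, ep p (r * ((x : (ZMod p)ˣ) : ZMod p))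

section gaussPeriod

variable {p : ℕ} [NeZero p] (H : Subgroup (ZMod p)ˣ)

lemma gaussPeriod_mul_coe (r : ZMod p) (h : H) :
    gaussPeriod p H (r * ((h : (ZMod p)ˣ) : ZMod p)) = gaussPeriod p H r :=
  Fintype.sum_equiv (Equiv.mulLeft h) _ _ fun x => by simp [mul_assoc]

lemma gaussPeriod_pow (m : ℕ) (r : ZMod p) :
    gaussPeriod p H r ^ m = ∑ x : Fin m → H, ep p (r * ∑ i, ((x i : (ZMod p)ˣ) : ZMod p)) := by
  rw [gaussPeriod, ← Fin.prod_const, Fintype.prod_sum]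
  simp only [ep_eq_stdAddChar, mul_sum, AddChar.map_sum_eq_prod]

lemma sum_norm_gaussPeriod_pow (m : ℕ) :
    ∑ r, ‖gaussPeriod p H r‖ ^ (2 * m) = (p : ℝ) * T p m H := by
  have hsq : ∀ r, ((‖gaussPeriod p H r‖ ^ (2 * m) : ℝ) : ℂ)
      = ∑ t : (Fin m → H) × (Fin m → H), ep p (r * (∑ i, ((t.1 i : (ZMod p)ˣ) : ZMod p)
          - ∑ i, ((t.2 i : (ZMod p)ˣ) : ZMod p))) := by
    intro r
    rw [pow_mul', ← norm_pow, Complex.ofReal_pow, ← Complex.mul_conj', gaussPeriod_pow, map_sum,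
      sum_mul_sum, ← Fintype.sum_prod_type']
    refine Fintype.sum_congr _ _ fun t => ?_
    rw [ep_eq_stdAddChar, ← AddChar.map_neg_eq_conj, ← AddChar.map_add_eq_mul, mul_sub,
      sub_eq_add_neg]
  have hT : (T p m H : ℂ) = #{t : (Fin m → H) × (Fin m → H) | ∑ i, ((t.1 i : (ZMod p)ˣ) : ZMod p)
          = ∑ i, ((t.2 i : (ZMod p)ˣ) : ZMod p)} := by
    rw [T, Nat.card_eq_fintype_card, Fintype.card_subtype]
  apply Complex.ofReal_injective
  rw [Complex.ofReal_sum]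
  simp_rw [hsq]
  rw [sum_comm]
  simp_rw [ep_eq_stdAddChar, AddChar.sum_mulShift _ (ZMod.isPrimitive_stdAddChar p), sub_eq_zero]
  simp [sum_ite, hT, mul_comm]

lemma sum_norm_gaussPeriod_units_mul_pow (a : (ZMod p)ˣ) (m : ℕ) :
    ∑ r, ‖gaussPeriod p H (a * r)‖ ^ (2 * m) = (p : ℝ) * T p m H := by
  rw [← sum_norm_gaussPeriod_pow H m]
  exact Fintype.sum_equiv (Units.mulLeft a) _ _ fun r => rfl

end gaussPeriod

lemma J_eq_card_filter (p : ℕ) [NeZero p] (L : ℤ) (N : ℕ) (H : Subgroup (ZMod p)ˣ) :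
    J p L N H = #{x ∈ (Icc (L + 1) (L + N) ×ˢ (univ : Finset H)) ×ˢ
        (Icc (L + 1) (L + N) ×ˢ (univ : Finset H)) |
      (x.1.1 : ZMod p) * ((x.1.2 : (ZMod p)ˣ) : ZMod p)
        = (x.2.1 : ZMod p) * ((x.2.2 : (ZMod p)ˣ) : ZMod p)} := by
  rw [J, ← Nat.card_eq_finsetCard]
  exact Nat.card_congr <| (Equiv.prodProdProdComm ℤ ℤ H H).subtypeEquiv fun q => by
    simp only [Equiv.prodProdProdComm_apply, mem_filter, mem_product, mem_univ, and_true, and_assoc]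

lemma pow_four_card_mul_sum_norm_gaussPeriod_le (p : ℕ) [NeZero p] (L : ℤ) (N : ℕ)
    (H : Subgroup (ZMod p)ˣ) (a : (ZMod p)ˣ) :
    ((Nat.card H : ℝ) * ∑ n ∈ Icc (L + 1) (L + N), ‖gaussPeriod p H (a * n)‖) ^ 4
      ≤ ((N : ℝ) * Nat.card H) ^ 2 * J p L N H * (p * T p 2 H) := by
  set s := Icc (L + 1) (L + N) ×ˢ (univ : Finset H)
  have hsum : ∑ q ∈ s, ‖gaussPeriod p H (a * ((q.1 : ZMod p) * ((q.2 : (ZMod p)ˣ) : ZMod p)))‖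
      = Nat.card H * ∑ n ∈ Icc (L + 1) (L + N), ‖gaussPeriod p H (a * n)‖ := by
    simp only [s, sum_product, ← mul_assoc, gaussPeriod_mul_coe, sum_const, card_univ,
      Nat.card_eq_fintype_card, nsmul_eq_mul, mul_sum]
  have hcard : (#s : ℝ) = N * Nat.card H := by
    rw [card_product, Int.card_Icc, card_univ, ← Nat.card_eq_fintype_card,
      show L + N + 1 - (L + 1) = N by ring, Int.toNat_natCast, Nat.cast_mul]
  have hfourth : ∑ r, ‖gaussPeriod p H (a * r)‖ ^ 4 = (p : ℝ) * T p 2 H :=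
    sum_norm_gaussPeriod_units_mul_pow H a 2
  have key := sum_comp_pow_four_le s (fun q => (q.1 : ZMod p) * ((q.2 : (ZMod p)ˣ) : ZMod p))
    fun r => ‖gaussPeriod p H (a * r)‖
  rwa [hsum, hcard, ← J_eq_card_filter, hfourth] at key

theorem stmt_13 (CJ C₂ : ℝ) (hCJ : 0 < CJ) (hC₂ : 0 < C₂) :
    ∀ ε > (0 : ℝ), ∃ C > (0 : ℝ),
      ∀ (p : ℕ) [Fact p.Prime] (L : ℤ) (N : ℕ) (H : Subgroup (ZMod p)ˣ) (a : (ZMod p)ˣ),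
      (Nat.card H : ℝ) < (p : ℝ) ^ ((1 : ℝ) / 2) →
      -- hypothesis on `J(𝒩, H)`
      (J p L N H : ℝ) ≤ CJ * (p : ℝ) ^ ε *
          ((Nat.card H : ℝ) ^ (2 : ℕ) + N * (Nat.card H : ℝ)
            + (N : ℝ) ^ (2 : ℕ) * (Nat.card H : ℝ) ^ (2 : ℕ) / p
            + N * (Nat.card H : ℝ) ^ ((7 : ℝ) / 4) / (p : ℝ) ^ ((1 : ℝ) / 4)) →
      -- hypothesis on `T₂(H)`
      (T p 2 H : ℝ) ≤ C₂ * (Nat.card H : ℝ) ^ ((49 : ℝ) / 20)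
          * (Real.log (Nat.card H)) ^ ((1 : ℝ) / 5) →
      (∑ n ∈ Finset.Icc (L + 1) (L + N),
          ‖(∑ x : H,
            ep p ((a : ZMod p) * (n : ZMod p) * ((x : (ZMod p)ˣ) : ZMod p)))‖)
        ≤ C * N * (Nat.card H : ℝ)
            * (((p : ℝ) / (N * (Nat.card H : ℝ) ^ ((2 : ℝ) + 11 / 20)))
              * (1 + (Nat.card H : ℝ) / N + N * (Nat.card H : ℝ) / p
                  + (Nat.card H : ℝ) ^ ((3 : ℝ) / 4) / (p : ℝ) ^ ((1 : ℝ) / 4)))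
              ^ ((1 : ℝ) / 4)
            * (p : ℝ) ^ ε := by
  intro ε hε
  set K := CJ * C₂ / (3 * ε / (1 / 5)) ^ ((1 : ℝ) / 5) with hK
  refine ⟨K ^ ((1 : ℝ) / 4), by positivity, fun p _ L N H a hH hJ hT => ?_⟩
  rcases N.eq_zero_or_pos with rfl | hN
  · simp
  have hp : (1 : ℝ) ≤ p := by exact_mod_cast (Fact.out : p.Prime).one_lt.le
  have hH₁ : (1 : ℝ) ≤ Nat.card H := Nat.one_le_cast.mpr Nat.card_pos
  have hlog := Real.log_rpow_le_rpow_div hH₁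
    (hH.le.trans (Real.rpow_le_self_of_one_le hp (by norm_num))) (c := 1 / 5) (δ := 3 * ε)
    (by norm_num) (by positivity)
  have hT' : (T p 2 H : ℝ) ≤ C₂ * (p ^ (3 * ε) / (3 * ε / (1 / 5)) ^ ((1 : ℝ) / 5))
      * (Nat.card H : ℝ) ^ ((49 : ℝ) / 20) :=
    hT.trans (by rw [mul_right_comm]; gcongr)
  have hS4 := pow_four_le_of_bounds (by positivity) (by positivity) (by positivity)
    (Nat.cast_nonneg _) (Nat.cast_nonneg _) (pow_four_card_mul_sum_norm_gaussPeriod_le p L N H a)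
    (hJ.trans_eq (by rw [sq_add_mul_add_add_eq_mul (by positivity) (by positivity) (by positivity)]))
    hT'
  calc _ ≤ K ^ ((1 : ℝ) / 4) * p ^ ε * (N * Nat.card H)
        * ((p : ℝ) / (N * (Nat.card H : ℝ) ^ ((2 : ℝ) + 11 / 20))
          * (1 + (Nat.card H : ℝ) / N + N * (Nat.card H : ℝ) / p
            + (Nat.card H : ℝ) ^ ((3 : ℝ) / 4) / (p : ℝ) ^ ((1 : ℝ) / 4))) ^ ((1 : ℝ) / 4) := by
        refine le_mul_rpow_of_pow_four_le (sum_nonneg fun _ _ => norm_nonneg _) (by positivity)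
          (by positivity) (hS4.trans_eq ?_)
        rw [mul_pow (K ^ _ * _), mul_pow (K ^ _), Real.rpow_one_div_four_pow_four (by positivity),
          ← Real.rpow_mul_rpow_three_mul (by positivity), hK]
        ring
    _ = _ := by ring
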